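/- Let A be selfadjoint with spectrum in [γ,Γ], h:[γ,Γ]→ℝ₊ continuous nonnegative, and f,g:[γ,Γ]→ℝ continuous and h-synchronous. Then for every unit vector x ∈ H: h(⟨Ax,x⟩)²⟨f(A)g(A)x,x⟩ − ⟨h(A)f(A)x,x⟩⟨h(A)g(A)x,x⟩ ≥ [h(⟨Ax,x⟩)⟨h(A)f(A)x,x⟩ − ⟨h(A)²x,x⟩ f(⟨Ax,x⟩)]·g(⟨Ax,x⟩) + [h(⟨Ax,x⟩) f(⟨Ax,x⟩) − ⟨h(A)f(A)x,x⟩]·⟨h(A)g(A)x,x⟩. -/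

import Mathlib

/-!
Put `s = ⟪A x, x⟫`, which lies in `[γ, Γ]`. By `h`-synchronicity the function
`φ t = (h s * f t - f s * h t) * (h s * g t - g s * h t)` is nonnegative on the spectrum of `A`,
so `φ(A) ≥ 0` and `⟪φ(A) x, x⟫ ≥ 0`. Since the functional calculus is multiplicative and its
values commute, expanding `⟪φ(A) x, x⟫` gives exactly the difference of the two sides.
-/

open scoped InnerProductSpace

namespace ContinuousLinearMap

lemma re_inner_le_re_inner_of_le {𝕜 E : Type*} [RCLike 𝕜] [NormedAddCommGroup E]
    [InnerProductSpace 𝕜 E] {S T : E →L[𝕜] E} (hST : S ≤ T) (x : E) :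
    RCLike.re ⟪S x, x⟫_𝕜 ≤ RCLike.re ⟪T x, x⟫_𝕜 := by
  simpa [inner_sub_left] using ((le_def S T).1 hST).re_inner_nonneg_left x

variable {H : Type*} [NormedAddCommGroup H] [InnerProductSpace ℂ H]

lemma re_inner_real_smul_apply (r : ℝ) (T : H →L[ℂ] H) (x : H) :
    (⟪(r • T) x, x⟫_ℂ).re = r * (⟪T x, x⟫_ℂ).re := by
  rw [smul_apply, RCLike.real_smul_eq_coe_smul (K := ℂ), inner_smul_real_left, Complex.smul_re,
    smul_eq_mul]

lemma re_inner_algebraMap_apply (r : ℝ) (x : H) :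
    (⟪algebraMap ℝ (H →L[ℂ] H) r x, x⟫_ℂ).re = r * ‖x‖ ^ 2 := by
  rw [Algebra.algebraMap_eq_smul_one, re_inner_real_smul_apply, one_apply_eq_self,
    ← RCLike.re_to_complex, inner_self_eq_norm_sq]

end ContinuousLinearMap

section

open ContinuousLinearMap

variable {H : Type*} [NormedAddCommGroup H] [InnerProductSpace ℂ H] [CompleteSpace H]

lemma re_inner_cfc_nonneg (A : H →L[ℂ] H) {φ : ℝ → ℝ} (hφ : ∀ t ∈ spectrum ℝ A, 0 ≤ φ t)
    (x : H) : 0 ≤ (⟪cfc φ A x, x⟫_ℂ).re := by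
  simpa using re_inner_le_re_inner_of_le (cfc_nonneg hφ) x

lemma IsSelfAdjoint.re_inner_apply_mem_Icc {A : H →L[ℂ] H} (hA : IsSelfAdjoint A) {γ Γ : ℝ}
    (hspec : spectrum ℝ A ⊆ Set.Icc γ Γ) {x : H} (hx : ‖x‖ = 1) :
    (⟪A x, x⟫_ℂ).re ∈ Set.Icc γ Γ := by
  have hlow := re_inner_le_re_inner_of_le
    (algebraMap_le_of_le_spectrum (fun t ht ↦ (hspec ht).1) hA) x
  have hupp := re_inner_le_re_inner_of_le
    (le_algebraMap_of_spectrum_le (fun t ht ↦ (hspec ht).2) hA) x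
  simp only [RCLike.re_to_complex, re_inner_algebraMap_apply, hx] at hlow hupp
  constructor <;> linarith

lemma re_inner_cfc_sub_mul_sub (A : H →L[ℂ] H) {f g h : ℝ → ℝ}
    (hf : ContinuousOn f (spectrum ℝ A)) (hg : ContinuousOn g (spectrum ℝ A))
    (hh : ContinuousOn h (spectrum ℝ A)) (a b c d : ℝ) (x : H) :
    (⟪cfc (fun t ↦ (a * f t - b * h t) * (c * g t - d * h t)) A x, x⟫_ℂ).re =
      a * c * (⟪(cfc f A * cfc g A) x, x⟫_ℂ).re - a * d * (⟪(cfc h A * cfc f A) x, x⟫_ℂ).re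
        - b * c * (⟪(cfc h A * cfc g A) x, x⟫_ℂ).re + b * d * (⟪(cfc h A ^ 2) x, x⟫_ℂ).re := by
  have hop : cfc (fun t ↦ (a * f t - b * h t) * (c * g t - d * h t)) A =
      (a * c) • (cfc f A * cfc g A) - (a * d) • (cfc h A * cfc f A)
        - (b * c) • (cfc h A * cfc g A) + (b * d) • cfc h A ^ 2 := by
    rw [cfc_mul _ _ A (by fun_prop) (by fun_prop), cfc_sub _ _ A (by fun_prop) (by fun_prop),
      cfc_sub _ _ A (by fun_prop) (by fun_prop), cfc_const_mul _ _ A, cfc_const_mul _ _ A,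
      cfc_const_mul _ _ A, cfc_const_mul _ _ A]
    simp only [mul_sub, sub_mul, smul_mul_smul_comm, pow_two, (cfc_commute_cfc f h A).eq]
    abel
  simp only [hop, add_apply, sub_apply, inner_add_left, inner_sub_left, Complex.add_re,
    Complex.sub_re, re_inner_real_smul_apply]

end

theorem stmt_14_general {H : Type*} [NormedAddCommGroup H] [InnerProductSpace ℂ H] [CompleteSpace H]
    (A : H →L[ℂ] H) (hA : IsSelfAdjoint A) (γ Γ : ℝ)
    (hspec : spectrum ℝ A ⊆ Set.Icc γ Γ)
    (h f g : ℝ → ℝ)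
    (hh : ContinuousOn h (Set.Icc γ Γ))
    (hf : ContinuousOn f (Set.Icc γ Γ)) (hg : ContinuousOn g (Set.Icc γ Γ))
    (hsync : ∀ s ∈ Set.Icc γ Γ, ∀ t ∈ Set.Icc γ Γ,
      0 ≤ (h t * f s - h s * f t) * (h t * g s - h s * g t))
    (x : H) (hx : ‖x‖ = 1) :
    (h ((⟪A x, x⟫_ℂ).re) * (⟪(cfc h A * cfc f A) x, x⟫_ℂ).re -
          (⟪((cfc h A) ^ 2) x, x⟫_ℂ).re * f ((⟪A x, x⟫_ℂ).re)) * g ((⟪A x, x⟫_ℂ).re) +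
        (h ((⟪A x, x⟫_ℂ).re) * f ((⟪A x, x⟫_ℂ).re) -
          (⟪(cfc h A * cfc f A) x, x⟫_ℂ).re) * (⟪(cfc h A * cfc g A) x, x⟫_ℂ).re ≤
      h ((⟪A x, x⟫_ℂ).re) ^ 2 * (⟪(cfc f A * cfc g A) x, x⟫_ℂ).re -
        (⟪(cfc h A * cfc f A) x, x⟫_ℂ).re * (⟪(cfc h A * cfc g A) x, x⟫_ℂ).re := by
  set s := (⟪A x, x⟫_ℂ).re
  have hs : s ∈ Set.Icc γ Γ := hA.re_inner_apply_mem_Icc hspec hx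
  have hφ : ∀ t ∈ spectrum ℝ A, 0 ≤ (h s * f t - f s * h t) * (h s * g t - g s * h t) :=
    fun t ht ↦ (hsync t (hspec ht) s hs).trans_eq (by ring)
  have hpos := re_inner_cfc_nonneg A hφ x
  rw [re_inner_cfc_sub_mul_sub A (hf.mono hspec) (hg.mono hspec) (hh.mono hspec)] at hpos
  linarith

theorem stmt_14 {H : Type*} [NormedAddCommGroup H] [InnerProductSpace ℂ H] [CompleteSpace H]
    (A : H →L[ℂ] H) (hA : IsSelfAdjoint A) (γ Γ : ℝ) (hγΓ : γ < Γ)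
    (hspec : spectrum ℝ A ⊆ Set.Icc γ Γ)
    (h f g : ℝ → ℝ)
    (hh : ContinuousOn h (Set.Icc γ Γ)) (hh0 : ∀ t ∈ Set.Icc γ Γ, 0 ≤ h t)
    (hf : ContinuousOn f (Set.Icc γ Γ)) (hg : ContinuousOn g (Set.Icc γ Γ))
    (hsync : ∀ s ∈ Set.Icc γ Γ, ∀ t ∈ Set.Icc γ Γ,
      0 ≤ (h t * f s - h s * f t) * (h t * g s - h s * g t))
    (x : H) (hx : ‖x‖ = 1) :
    (h ((⟪A x, x⟫_ℂ).re) * (⟪(cfc h A * cfc f A) x, x⟫_ℂ).re -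
          (⟪((cfc h A) ^ 2) x, x⟫_ℂ).re * f ((⟪A x, x⟫_ℂ).re)) * g ((⟪A x, x⟫_ℂ).re) +
        (h ((⟪A x, x⟫_ℂ).re) * f ((⟪A x, x⟫_ℂ).re) -
          (⟪(cfc h A * cfc f A) x, x⟫_ℂ).re) * (⟪(cfc h A * cfc g A) x, x⟫_ℂ).re ≤
      h ((⟪A x, x⟫_ℂ).re) ^ 2 * (⟪(cfc f A * cfc g A) x, x⟫_ℂ).re -
        (⟪(cfc h A * cfc f A) x, x⟫_ℂ).re * (⟪(cfc h A * cfc g A) x, x⟫_ℂ).re :=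
  stmt_14_general A hA γ Γ hspec h f g hh hf hg hsync x hx
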